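/- For every positive integer e, the first-column entries of R_n^e are a_{i,1}^{(e)} = F_{e-1}^{n-i} * F_e^{i-1} for 1 ≤ i ≤ n, where 0^0 is interpreted as 1. -/
import Mathlib


/-- `R n` is the `n × n` integer matrix whose 1-based `(i,j)` entry is `C(i-1, n-j)`. -/
def Rmat (n : ℕ) : Matrix (Fin n) (Fin n) ℤ :=
  Matrix.of fun i j => (Nat.choose i.1 (n - 1 - j.1) : ℤ)


lemma Rmat_aux (n : ℕ) (hn : 1 ≤ n) :
    ∀ e : ℕ, 0 < e → ∀ r : Fin n,
      (Rmat n ^ e) r ⟨0, hn⟩ =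
        (Nat.fib (e - 1) : ℤ) ^ (n - 1 - r.1) * (Nat.fib e : ℤ) ^ r.1 := by
  intro e
  induction e with
  | zero => intro h; exact absurd h (by omega)
  | succ e ih =>
    intro _ r
    rcases Nat.eq_zero_or_pos e with he | he
    · subst he
      rw [pow_one]
      simp only [Rmat, Matrix.of_apply, Nat.sub_zero, Nat.add_sub_cancel,
        Nat.fib_zero, Nat.fib_one]
      rcases Nat.lt_or_ge r.1 (n - 1) with h | h
      · rw [Nat.choose_eq_zero_of_lt (by omega)]
        push_cast
        rw [zero_pow (by omega : n - 1 - r.1 ≠ 0)]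
        ring
      · have hr : r.1 = n - 1 := le_antisymm (by omega) h
        rw [hr, Nat.sub_self, Nat.choose_self]
        simp
    · have hr : r.1 ≤ n - 1 := by omega
      rw [pow_succ', Matrix.mul_apply]
      simp only [Rmat, Matrix.of_apply]
      calc (∑ k : Fin n, (Nat.choose r.1 (n - 1 - k.1) : ℤ) * (Rmat n ^ e) k ⟨0, hn⟩)
          = ∑ k : Fin n, (Nat.choose r.1 (n - 1 - k.1) : ℤ) *
              ((Nat.fib (e - 1) : ℤ) ^ (n - 1 - k.1) * (Nat.fib e : ℤ) ^ k.1) := by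
            exact Finset.sum_congr rfl fun k _ => by rw [ih he k]
        _ = ∑ k ∈ Finset.range n, (Nat.choose r.1 (n - 1 - k) : ℤ) *
              ((Nat.fib (e - 1) : ℤ) ^ (n - 1 - k) * (Nat.fib e : ℤ) ^ k) := by
            exact Fin.sum_univ_eq_sum_range (fun k => (Nat.choose r.1 (n - 1 - k) : ℤ) *
              ((Nat.fib (e - 1) : ℤ) ^ (n - 1 - k) * (Nat.fib e : ℤ) ^ k)) n
        _ = ∑ m ∈ Finset.range n, (Nat.choose r.1 m : ℤ) *
              ((Nat.fib (e - 1) : ℤ) ^ m * (Nat.fib e : ℤ) ^ (n - 1 - m)) := by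
            rw [← Finset.sum_range_reflect (fun m =>
              (Nat.choose r.1 m : ℤ) *
              ((Nat.fib (e - 1) : ℤ) ^ m * (Nat.fib e : ℤ) ^ (n - 1 - m))) n]
            refine Finset.sum_congr rfl fun k hk => ?_
            simp only [Finset.mem_range] at hk
            have : n - 1 - (n - 1 - k) = k := by omega
            rw [this]
        _ = ∑ m ∈ Finset.range (r.1 + 1), (Nat.choose r.1 m : ℤ) *
              ((Nat.fib (e - 1) : ℤ) ^ m * (Nat.fib e : ℤ) ^ (n - 1 - m)) := by
            refine (Finset.sum_subset (by intro x hx; simp only [Finset.mem_range] at *; omega)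
              fun m _ hm => ?_).symm
            simp only [Finset.mem_range, not_lt] at hm
            simp [Nat.choose_eq_zero_of_lt (show r.1 < m by omega)]
        _ = (∑ m ∈ Finset.range (r.1 + 1), (Nat.fib (e - 1) : ℤ) ^ m *
              (Nat.fib e : ℤ) ^ (r.1 - m) * (Nat.choose r.1 m : ℤ)) *
              (Nat.fib e : ℤ) ^ (n - 1 - r.1) := by
            rw [Finset.sum_mul]
            refine Finset.sum_congr rfl fun m hm => ?_
            simp only [Finset.mem_range] at hm
            have : n - 1 - m = (r.1 - m) + (n - 1 - r.1) := by omega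
            rw [this, pow_add]; ring
        _ = ((Nat.fib (e - 1) : ℤ) + (Nat.fib e : ℤ)) ^ r.1 *
              (Nat.fib e : ℤ) ^ (n - 1 - r.1) := by rw [add_pow]
        _ = (Nat.fib (e + 1 - 1) : ℤ) ^ (n - 1 - r.1) * (Nat.fib (e + 1) : ℤ) ^ r.1 := by
            have h1 : Nat.fib (e + 1) = Nat.fib (e - 1) + Nat.fib e := by
              have : e - 1 + 2 = e + 1 := by omega
              have h2 : e - 1 + 1 = e := by omega
              rw [← this, Nat.fib_add_two, h2]
            rw [h1, Nat.add_sub_cancel]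
            push_cast
            ring

/-- First-column entries of `R_n ^ e`: `a_{i,1} = F_{e-1}^{n-i} F_e^{i-1}`
for `1 ≤ i ≤ n` (1-based indexing, with `0^0 = 1`). -/
theorem Rmat_pow_first_col (n : ℕ) (hn : 1 ≤ n) (e : ℕ) (he : 0 < e) (i : ℕ)
    (hi1 : 1 ≤ i) (hin : i ≤ n) :
    (Rmat n ^ e) ⟨i - 1, by omega⟩ ⟨0, by omega⟩ =
      (Nat.fib (e - 1) : ℤ) ^ (n - i) * (Nat.fib e : ℤ) ^ (i - 1) := by
  have h := Rmat_aux n hn e he ⟨i - 1, by omega⟩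
  simpa [show n - 1 - (i - 1) = n - i by omega] using h
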